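/- arXiv:1206.0474 — 6 statements merged into one kernel-verified Lean document; each statement's English description precedes it below -/
import Mathlib

section
/- Let G be a finitely generated group and let C be a class of finite groups (a property of groups invariant under isomorphism) that is closed under taking subgroups and extensions and contains at least one non-trivial group. Let K be the intersection of all normal subgroups N of G with G/N ∈ C. Let H be a normal subgroup of finite index in G with G/H ∈ C, and let H' be the kernel of the composite H → H_1(H) → H_1(H)/tors(H_1(H)), where H_1(H) = H^{ab} is the abelianization and tors denotes the torsion subgroup. Then K ⊆ H'; in particular, the first Betti numbers satisfy b_1(H/K) = b_1(H). -/
/-!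
The class `C` contains a group of prime order `p` (Cauchy), hence, being closed under
subgroups, isomorphisms and extensions, every finite `p`-group. For each `k`, the subgroup
`H_k = H^{p^k}[H,H]` is characteristic in `H`, hence normal in `G`, and `G/H_k` is an extension
of `G/H ∈ C` by the finite abelian `p`-group `H/H_k`; so `K ≤ H_k` for all `k`. Thus the image of
`g ∈ K` in the finitely generated free abelian group `H_1(H)/tors` is divisible by every `p^k`,
and Krull's intersection theorem makes it zero. Finally, a surjection `H → Q` whose kernel dies in
`H_1(H) ⊗ ℚ` induces a surjection `H_1(H) → H_1(Q)` with torsion kernel, so the `ℤ`-ranks, which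
are the first Betti numbers, agree.
-/

open scoped TensorProduct

/-- The first Betti number of a group `G` with coefficients in a field `K`:
`b₁(G;K) = dim_K (G^{ab} ⊗_ℤ K)`. -/
noncomputable def b1 (K : Type*) [Field K] (G : Type*) [Group G] : ℕ :=
  Module.finrank K (K ⊗[ℤ] (Additive (Abelianization G)))

theorem Abelianization.of_surjective (G : Type*) [Group G] :
    Function.Surjective (Abelianization.of : G →* Abelianization G) :=
  QuotientGroup.mk_surjective

instance Abelianization.fg (G : Type*) [Group G] [Group.FG G] : Group.FG (Abelianization G) :=
  Group.fg_of_surjective (Abelianization.of_surjective G)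

theorem Abelianization.map_surjective {G H : Type*} [Group G] [Group H] {f : G →* H}
    (hf : Function.Surjective f) : Function.Surjective (Abelianization.map f) := by
  intro y
  obtain ⟨x, rfl⟩ := ((Abelianization.of_surjective H).comp hf) y
  exact ⟨Abelianization.of x, Abelianization.map_of f x⟩

theorem Abelianization.ker_map_of_surjective {G H : Type*} [Group G] [Group H] {f : G →* H}
    (hf : Function.Surjective f) : (Abelianization.map f).ker = f.ker.map Abelianization.of := by
  refine le_antisymm ?_ (Subgroup.map_le_iff_le_comap.mpr fun g hg => ?_)
  · intro a ha
    obtain ⟨g, rfl⟩ := Abelianization.of_surjective G a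
    rw [MonoidHom.mem_ker, Abelianization.map_of, ← MonoidHom.mem_ker, Abelianization.ker_of,
      commutator, ← Subgroup.map_top_of_surjective f hf, ← Subgroup.map_commutator] at ha
    obtain ⟨c, hc, hcg⟩ := ha
    have hc' : Abelianization.of c = 1 := by
      rwa [← MonoidHom.mem_ker, Abelianization.ker_of]
    exact ⟨c⁻¹ * g, by simp [hcg], by simp [hc']⟩
  · simp [MonoidHom.mem_ker.mp hg]

theorem ofMul_mem_torsion_int_iff {A : Type*} [CommGroup A] {a : A} :
    Additive.ofMul a ∈ Submodule.torsion ℤ (Additive A) ↔ a ∈ CommGroup.torsion A := by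
  rw [← Submodule.mem_toAddSubgroup, Submodule.torsion_int, AddCommGroup.mem_torsion,
    isOfFinAddOrder_ofMul_iff, CommGroup.mem_torsion]

theorem mem_torsion_of_forall_mem_range_powMonoidHom {A : Type*} [CommGroup A] [Group.FG A]
    {p : ℕ} (hp : p ≠ 1) {a : A} (ha : ∀ k, a ∈ (powMonoidHom (p ^ k) : A →* A).range) :
    a ∈ CommGroup.torsion A := by
  rw [← ofMul_mem_torsion_int_iff, ← Submodule.Quotient.mk_eq_zero, ← Submodule.mem_bot ℤ,
    ← (Ideal.span {(p : ℤ)}).iInf_pow_smul_eq_bot_of_isTorsionFree ?_, Submodule.mem_iInf]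
  · intro k
    obtain ⟨b, rfl⟩ := ha k
    have hb : Additive.ofMul (b ^ p ^ k) = ((p : ℤ) ^ k) • Additive.ofMul b := by
      rw [ofMul_pow, ← natCast_zsmul, Nat.cast_pow]
    rw [powMonoidHom_apply, hb, Submodule.Quotient.mk_smul]
    exact Submodule.smul_mem_smul (Ideal.pow_mem_pow (Ideal.mem_span_singleton_self _) k)
      Submodule.mem_top
  · rw [Ne, Ideal.span_singleton_eq_top, Int.isUnit_iff]
    omega

theorem b1_rat_eq_finrank_int (G : Type*) [Group G] :
    b1 ℚ G = Module.finrank ℤ (Additive (Abelianization G)) := by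
  have := (isLocalizedModule_iff_isBaseChange (nonZeroDivisors ℤ) ℚ _).mpr
    (TensorProduct.isBaseChange ℤ (Additive (Abelianization G)) ℚ)
  rw [b1, IsLocalization.finrank_eq ℚ (nonZeroDivisors ℤ) le_rfl]
  exact @IsLocalizedModule.finrank_eq _ _ _ _ _ _ _ _ _ _ this le_rfl

theorem b1_rat_eq_of_surjective_of_ker_le {H Q : Type*} [Group H] [Group Q] (ψ : H →* Q)
    (hψ : Function.Surjective ψ)
    (hker : ψ.ker ≤ (CommGroup.torsion (Abelianization H)).comap Abelianization.of) :
    b1 ℚ Q = b1 ℚ H := by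
  let f := (MonoidHom.toAdditive (Abelianization.map ψ)).toIntLinearMap
  have hf : Function.Surjective f := Abelianization.map_surjective hψ
  have hfker : LinearMap.ker f ≤ Submodule.torsion ℤ _ := by
    intro x hx
    have hx' : x.toMul ∈ (Abelianization.map ψ).ker := hx
    rw [Abelianization.ker_map_of_surjective hψ] at hx'
    exact ofMul_mem_torsion_int_iff.mpr (Subgroup.map_le_iff_le_comap.mpr hker hx')
  rw [b1_rat_eq_finrank_int, b1_rat_eq_finrank_int, ← (f.quotKerEquivOfSurjective hf).finrank_eq,
    finrank_quotient_eq_of_le_torsion hfker]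

/-- The subgroup `H^n [H, H]`, i.e. the kernel of `H → H₁(H; ℤ/n)`. -/
def powCommutator (H : Type*) [Group H] (n : ℕ) : Subgroup H :=
  (powMonoidHom n : Abelianization H →* Abelianization H).range.comap Abelianization.of

namespace powCommutator

variable {H : Type*} [Group H]

theorem mem_iff {n : ℕ} {h : H} :
    h ∈ powCommutator H n ↔ ∃ a : Abelianization H, a ^ n = Abelianization.of h :=
  Iff.rfl

instance characteristic (n : ℕ) : (powCommutator H n).Characteristic := by
  refine Subgroup.characteristic_iff_le_comap.mpr fun φ h hh => ?_
  obtain ⟨a, ha⟩ := mem_iff.mp hh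
  refine mem_iff.mpr ⟨Abelianization.map φ.toMonoidHom a, ?_⟩
  rw [← map_pow, ha, Abelianization.map_of]

theorem isPGroup_quotient {p : ℕ} (k : ℕ) : IsPGroup p (H ⧸ powCommutator H (p ^ k)) := by
  intro x
  obtain ⟨h, rfl⟩ := QuotientGroup.mk_surjective x
  refine ⟨k, (QuotientGroup.eq_one_iff _).mpr (mem_iff.mpr ⟨Abelianization.of h, ?_⟩)⟩
  rw [map_pow]

theorem finite_quotient [Group.FG H] {n : ℕ} (hn : n ≠ 0) :
    Finite (H ⧸ powCommutator H n) := by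
  rw [← Subgroup.index_ne_zero_iff_finite, powCommutator,
    Subgroup.index_comap_of_surjective _ (Abelianization.of_surjective H),
    Subgroup.index_ne_zero_iff_finite]
  refine CommGroup.finite_of_fg_isMulTorsion _ fun x => ?_
  obtain ⟨a, rfl⟩ := QuotientGroup.mk_surjective x
  refine isOfFinOrder_iff_pow_eq_one.mpr ⟨n, Nat.pos_of_ne_zero hn, ?_⟩
  rw [← QuotientGroup.mk_pow, QuotientGroup.eq_one_iff]
  exact ⟨a, rfl⟩

theorem iInf_pow_le_comap_torsion [Group.FG H] {p : ℕ} (hp : p ≠ 1) :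
    ⨅ k, powCommutator H (p ^ k) ≤
      (CommGroup.torsion (Abelianization H)).comap Abelianization.of :=
  fun _ hh => mem_torsion_of_forall_mem_range_powMonoidHom hp fun k => Subgroup.mem_iInf.mp hh k

end powCommutator

section FiniteGroupClass

variable {C : (X : Type) → [Group X] → Prop}
  (hCiso : ∀ (H₁ H₂ : Type) [Group H₁] [Group H₂], Nonempty (H₁ ≃* H₂) → C H₁ → C H₂)
  (hCsub : ∀ (H : Type) [Group H] (S : Subgroup H), C H → C S)
  (hCext : ∀ (E Q : Type) [Group E] [Group Q] (φ : E →* Q),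
    Function.Surjective φ → C (MonoidHom.ker φ) → C Q → C E)

include hCiso hCsub in
theorem exists_prime_forall_card_eq_mem (hCfin : ∀ (H : Type) [Group H], C H → Finite H)
    (hCnontriv : ∃ (H : Type) (_ : Group H), C H ∧ Nontrivial H) :
    ∃ p, p.Prime ∧ ∀ (X : Type) [Group X], Nat.card X = p → C X := by
  obtain ⟨F, _, hF, _⟩ := hCnontriv
  have := hCfin F hF
  obtain ⟨p, hp, hpF⟩ := Nat.exists_prime_and_dvd (Finite.one_lt_card (α := F)).ne'
  have : Fact p.Prime := ⟨hp⟩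
  obtain ⟨g, hg⟩ := exists_prime_orderOf_dvd_card' p hpF
  refine ⟨p, hp, fun X _ hX => hCiso (Subgroup.zpowers g) X ⟨mulEquivOfPrimeCardEq ?_ hX⟩
    (hCsub F _ hF)⟩
  rw [Nat.card_zpowers, hg]

include hCiso hCsub hCext in
theorem mem_of_isPGroup {p : ℕ} [Fact p.Prime]
    (hCp : ∀ (X : Type) [Group X], Nat.card X = p → C X)
    (X : Type) [Group X] [Finite X] (hX : IsPGroup p X) : C X := by
  induction h : Nat.card X using Nat.strong_induction_on generalizing X with
  | _ n ih =>
  rcases subsingleton_or_nontrivial X with hX1 | hX1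
  · have : Unique X := uniqueOfSubsingleton 1
    exact hCiso (⊥ : Subgroup (Multiplicative (ZMod p))) X ⟨MulEquiv.ofUnique⟩
      (hCsub _ ⊥ (hCp _ (by simp)))
  · have := hX.center_nontrivial
    obtain ⟨m, hm, hcard⟩ := (hX.to_subgroup (Subgroup.center X)).nontrivial_iff_card.mp this
    obtain ⟨z, hz⟩ := exists_prime_orderOf_dvd_card' (G := Subgroup.center X) p
      (hcard ▸ dvd_pow_self p hm.ne')
    let N := Subgroup.zpowers (z : X)
    have hN : N.Normal := ⟨fun n hn g => by
      rwa [Subgroup.mem_center_iff.mp (Subgroup.zpowers_le.mpr z.2 hn) g, mul_inv_cancel_right]⟩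
    have hNcard : Nat.card N = p := by rw [Nat.card_zpowers, Subgroup.orderOf_coe, hz]
    refine hCext X (X ⧸ N) (QuotientGroup.mk' N) (QuotientGroup.mk'_surjective N) ?_
      (ih _ ?_ (X ⧸ N) (hX.to_quotient N) rfl)
    · rw [QuotientGroup.ker_mk']
      exact hCp N hNcard
    · rw [← h, ← N.card_mul_index, hNcard]
      exact lt_mul_left Nat.card_pos (Fact.out : p.Prime).one_lt

include hCiso hCext in
theorem quotient_map_subtype_ker_mem {G Q : Type} [Group G] [Group Q] {φ : G →* Q}
    (hφ : Function.Surjective φ) (hQ : C Q) (M : Subgroup φ.ker) [M.Normal]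
    [(M.map φ.ker.subtype).Normal] (hM : C (φ.ker ⧸ M)) : C (G ⧸ M.map φ.ker.subtype) := by
  let M' := M.map φ.ker.subtype
  have hle : M' ≤ φ.ker := Subgroup.map_subtype_le M
  refine hCext _ Q (QuotientGroup.lift M' φ hle)
    (QuotientGroup.lift_surjective_of_surjective _ φ hφ hle) ?_ hQ
  let f := (QuotientGroup.mk' M').comp φ.ker.subtype
  have hker : f.ker = M := by
    rw [← MonoidHom.comap_ker, QuotientGroup.ker_mk']
    exact Subgroup.comap_map_eq_self_of_injective φ.ker.subtype_injective M
  have hrange : f.range = φ.ker.map (QuotientGroup.mk' M') := by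
    rw [MonoidHom.range_comp, Subgroup.range_subtype]
  rw [QuotientGroup.ker_lift]
  exact hCiso _ _ ⟨(QuotientGroup.quotientMulEquivOfEq hker.symm).trans
    ((QuotientGroup.quotientKerEquivRange f).trans (MulEquiv.subgroupCongr hrange))⟩ hM

end FiniteGroupClass

theorem stmt6_general (G : Type) [Group G] [Group.FG G]
    (C : (H : Type) → [inst : Group H] → Prop)
    (hCfin : ∀ (H : Type) [Group H], C H → Finite H)
    (hCiso : ∀ (H₁ H₂ : Type) [Group H₁] [Group H₂], Nonempty (H₁ ≃* H₂) → C H₁ → C H₂)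
    (hCsub : ∀ (H : Type) [Group H] (S : Subgroup H), C H → C S)
    (hCext : ∀ (E Q : Type) [Group E] [Group Q] (φ : E →* Q),
      Function.Surjective φ → C (MonoidHom.ker φ) → C Q → C E)
    (hCnontriv : ∃ (H : Type) (_ : Group H), C H ∧ Nontrivial H)
    (K : Subgroup G)
    (hK : K = ⨅ (N : Subgroup G)
      (_ : ∃ (Q : Type) (_ : Group Q) (φ : G →* Q),
        Function.Surjective φ ∧ MonoidHom.ker φ = N ∧ C Q), N)
    (H : Subgroup G) (hHfi : H.FiniteIndex)
    (hHC : ∃ (Q : Type) (_ : Group Q) (φ : G →* Q),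
      Function.Surjective φ ∧ MonoidHom.ker φ = H ∧ C Q)
    (H' : Subgroup H)
    (hH' : H' = Subgroup.comap (Abelianization.of : H →* Abelianization H)
      (CommGroup.torsion (Abelianization H))) :
    K ≤ Subgroup.map H.subtype H' ∧
    ∀ (Q : Type) [Group Q] (ψ : H →* Q), Function.Surjective ψ →
      MonoidHom.ker ψ = K.subgroupOf H → b1 ℚ Q = b1 ℚ H := by
  obtain ⟨p, hp, hCp⟩ := exists_prime_forall_card_eq_mem hCiso hCsub hCfin hCnontriv
  have : Fact p.Prime := ⟨hp⟩
  obtain ⟨Q₀, _, φ, hφ, rfl, hQ₀⟩ := hHC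
  have hK_le (k : ℕ) : K ≤ (powCommutator φ.ker (p ^ k)).map φ.ker.subtype := by
    have := powCommutator.finite_quotient (H := φ.ker) (pow_ne_zero k hp.ne_zero)
    rw [hK]
    exact iInf₂_le _ ⟨_, _, QuotientGroup.mk' _, QuotientGroup.mk'_surjective _,
      QuotientGroup.ker_mk' _, quotient_map_subtype_ker_mem hCiso hCext hφ hQ₀ _
        (mem_of_isPGroup hCiso hCsub hCext hCp _ (powCommutator.isPGroup_quotient k))⟩
  have hK_le_H' : K ≤ H'.map φ.ker.subtype := calc
    K ≤ ⨅ k, (powCommutator φ.ker (p ^ k)).map φ.ker.subtype := le_iInf hK_le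
    _ = (⨅ k, powCommutator φ.ker (p ^ k)).map φ.ker.subtype :=
      (Subgroup.map_iInf _ φ.ker.subtype_injective _).symm
    _ ≤ H'.map φ.ker.subtype :=
      hH' ▸ Subgroup.map_mono (powCommutator.iInf_pow_le_comap_torsion hp.ne_one)
  refine ⟨hK_le_H', fun Q _ ψ hψ hψker => b1_rat_eq_of_surjective_of_ker_le ψ hψ ?_⟩
  rw [hψker, ← hH']
  exact fun x hx => (Subgroup.mem_map_iff_mem φ.ker.subtype_injective).mp (hK_le_H' hx)

/-- Let `G` be a finitely generated group and `C` an isomorphism-invariant class of finite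
groups closed under subgroups and extensions containing a non-trivial group.  Let `K` be the
intersection of all normal subgroups `N` of `G` with `G/N ∈ C` (expressed via surjections
with kernel `N` onto a group in `C`).  Let `H` be a finite index normal subgroup with
`G/H ∈ C` and let `H'` be the kernel of `H → H₁(H) → H₁(H)/tors(H₁(H))`.  Then `K ⊆ H'`;
in particular `b₁(H/K) = b₁(H)` (where `H/K` is expressed as any quotient of `H` by the
subgroup corresponding to `K`). -/
theorem stmt6 (G : Type) [Group G] [Group.FG G]
    (C : (H : Type) → [inst : Group H] → Prop)
    (hCfin : ∀ (H : Type) [Group H], C H → Finite H)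
    (hCiso : ∀ (H₁ H₂ : Type) [Group H₁] [Group H₂], Nonempty (H₁ ≃* H₂) → C H₁ → C H₂)
    (hCsub : ∀ (H : Type) [Group H] (S : Subgroup H), C H → C S)
    (hCext : ∀ (E Q : Type) [Group E] [Group Q] (φ : E →* Q),
      Function.Surjective φ → C (MonoidHom.ker φ) → C Q → C E)
    (hCnontriv : ∃ (H : Type) (_ : Group H), C H ∧ Nontrivial H)
    (K : Subgroup G)
    (hK : K = ⨅ (N : Subgroup G)
      (_ : ∃ (Q : Type) (_ : Group Q) (φ : G →* Q),
        Function.Surjective φ ∧ MonoidHom.ker φ = N ∧ C Q), N)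
    (H : Subgroup G) (hHnorm : H.Normal) (hHfi : H.FiniteIndex)
    (hHC : ∃ (Q : Type) (_ : Group Q) (φ : G →* Q),
      Function.Surjective φ ∧ MonoidHom.ker φ = H ∧ C Q)
    (H' : Subgroup H)
    (hH' : H' = Subgroup.comap (Abelianization.of : H →* Abelianization H)
      (CommGroup.torsion (Abelianization H))) :
    K ≤ Subgroup.map H.subtype H' ∧
    ∀ (Q : Type) [Group Q] (ψ : H →* Q), Function.Surjective ψ →
      MonoidHom.ker ψ = K.subgroupOf H → b1 ℚ Q = b1 ℚ H :=
  stmt6_general G C hCfin hCiso hCsub hCext hCnontriv K hK H hHfi hHC H' hH'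
end

section
/- Let p be a prime, H a finite p-group, and m, n positive integers. Let α : F_p[H]^m → F_p[H]^n be a homomorphism of left F_p[H]-modules, and let ᾱ : F_p^m → F_p^n be the induced F_p-linear map obtained by applying the augmentation homomorphism (equivalently, ᾱ = id_{F_p} ⊗_{F_p[H]} α, where F_p carries the trivial H-action). Then dim_{F_p}(im(α)) ≥ |H| · dim_{F_p}(im(ᾱ)), where dim_{F_p}(im(α)) is the dimension of the image of α viewed as an F_p-linear map between F_p-vector spaces of dimensions m·|H| and n·|H|. -/
/-!
Lift a basis of `im ᾱ` to vectors `w_j ∈ im α` whose augmentations form that basis. It suffices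
that the `w_j` are linearly independent over `𝔽_p[H]`: then `im α` contains a free module of
rank `dim im ᾱ`, of `𝔽_p`-dimension `|H| · dim im ᾱ`. A nonzero kernel of `a ↦ ∑ a_j w_j` is a
finite `𝔽_p`-space acted on by the `p`-group `H`, so it contains a nonzero invariant vector. The
invariant vectors are `(c_j σ)_j` with `σ = ∑_h h`, and `σ x = ε(x) σ`, so
`∑ c_j σ w_j = (∑ c_j ε(w_j)) σ`, which vanishes only for `c = 0`.
-/

open MonoidAlgebra

section GroupSum

variable (k H : Type*) [CommSemiring k] [Group H] [Fintype H]

noncomputable def groupSum : k[H] := ∑ h : H, of k H h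

variable {k H}

@[simp]
theorem coeff_groupSum (g : H) : (groupSum k H).coeff g = 1 := by
  classical
  simp [groupSum, coeff_sum, Finsupp.single_apply]

theorem groupSum_ne_zero [Nontrivial k] : groupSum k H ≠ 0 := fun h => by
  simpa [h] using coeff_groupSum (k := k) (1 : H)

theorem groupSum_mul_of (g : H) : groupSum k H * of k H g = groupSum k H := by
  rw [groupSum, Finset.sum_mul]
  exact Fintype.sum_equiv (Equiv.mulRight g) _ _ fun h => by simp

theorem groupSum_mul (x : k[H]) : groupSum k H * x = lift k k H 1 x • groupSum k H := by
  induction x using MonoidAlgebra.induction_linear with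
  | zero => simp
  | add x y hx hy => rw [mul_add, hx, hy, map_add, add_smul]
  | single g c =>
    rw [← smul_of, mul_smul_comm, groupSum_mul_of, map_smul, lift_of]
    simp

theorem eq_smul_groupSum_of_forall_of_mul_eq {x : k[H]} (hx : ∀ h : H, of k H h * x = x) :
    x = x.coeff 1 • groupSum k H := by
  ext g
  simpa using (congrArg (fun y : k[H] => y.coeff g) (hx g)).symm

end GroupSum

section Invariants

variable {k H : Type*} [CommRing k] [Group H] {p : ℕ} [Fact p.Prime] [CharP k p]
  {M : Type*} [AddCommGroup M] [Module k[H] M] [Module k M] [Finite M]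

theorem IsPGroup.exists_ne_zero_forall_of_smul_eq (hH : IsPGroup p H) [Nontrivial M] :
    ∃ x : M, x ≠ 0 ∧ ∀ h : H, of k H h • x = x := by
  let _ : MulAction H M := MulAction.compHom M (of k H)
  obtain ⟨x, hx0⟩ := exists_ne (0 : M)
  have hpx : p • x = 0 := by
    rw [← Nat.cast_smul_eq_nsmul k, CharP.cast_eq_zero, zero_smul]
  have hp_dvd : p ∣ Nat.card M := addOrderOf_eq_prime hpx hx0 ▸ addOrderOf_dvd_natCard x
  obtain ⟨y, hy, hy0⟩ := hH.exists_fixed_point_of_prime_dvd_card_of_fixed_point M hp_dvd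
    (a := 0) fun h => smul_zero (of k H h)
  exact ⟨y, Ne.symm hy0, hy⟩

theorem IsPGroup.injective_of_forall_smul_eq (hH : IsPGroup p H) [IsScalarTower k k[H] M]
    {N : Type*} [AddCommGroup N] [Module k[H] N] (f : M →ₗ[k[H]] N)
    (hf : ∀ x, (∀ h : H, of k H h • x = x) → f x = 0 → x = 0) : Function.Injective f := by
  rw [← LinearMap.ker_eq_bot]
  by_contra hker
  have := Submodule.nontrivial_iff_ne_bot.mpr hker
  obtain ⟨x, hx0, hx⟩ := hH.exists_ne_zero_forall_of_smul_eq (k := k) (M := LinearMap.ker f)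
  exact hx0 (Subtype.ext (hf x (fun h => congrArg Subtype.val (hx h)) x.2))

end Invariants

instance {k H : Type*} [CommSemiring k] [Group H] [Finite H] : Module.Finite k k[H] :=
  .of_basis (basis H k)

theorem IsPGroup.linearIndependent_of_linearIndependent_augmentation {k H : Type*} [Field k]
    [Finite k] [Group H] [Fintype H] {p : ℕ} [Fact p.Prime] [CharP k p] (hH : IsPGroup p H)
    {ι κ : Type*} [Fintype ι] (w : ι → κ → k[H])
    (hw : LinearIndependent k fun i j => lift k k H 1 (w i j)) : LinearIndependent k[H] w := by
  have : Finite (ι →₀ k[H]) := Module.finite_of_finite k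
  refine hH.injective_of_forall_smul_eq (k := k) _ fun x hx hwx => ?_
  have hx_eq : ∀ i, x i = (x i).coeff 1 • groupSum k H := fun i =>
    eq_smul_groupSum_of_forall_of_mul_eq fun h => by simpa using congrArg (· i) (hx h)
  have hc : ∑ i, (x i).coeff 1 • (fun j => lift k k H 1 (w i j)) = 0 := by
    funext j
    have hsum : (∑ i, (x i).coeff 1 * lift k k H 1 (w i j)) • groupSum k H = 0 := by
      calc _ = ∑ i, x i * w i j := by
            rw [Finset.sum_smul]
            refine Finset.sum_congr rfl fun i _ => ?_
            conv_rhs => rw [hx_eq i, smul_mul_assoc, groupSum_mul, smul_smul]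
        _ = 0 := by
            simpa [Finsupp.linearCombination_apply, Finsupp.sum_fintype] using congrArg (· j) hwx
    simpa using (smul_eq_zero.mp hsum).resolve_right groupSum_ne_zero
  have := Fintype.linearIndependent_iff.mp hw _ hc
  ext i
  rw [hx_eq i, this i, zero_smul, Finsupp.zero_apply]

theorem card_mul_card_le_finrank_of_linearIndependent {k H : Type*} [Field k] [Group H]
    [Finite H] {ι N : Type*} [Fintype ι] [AddCommGroup N] [Module k[H] N] [Module k N]
    [IsScalarTower k k[H] N] [Module.Finite k N] {S : Submodule k[H] N} {w : ι → N}
    (hw : LinearIndependent k[H] w) (hwS : ∀ i, w i ∈ S) :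
    Fintype.card ι * Nat.card H ≤ Module.finrank k (S.restrictScalars k) := by
  let f : (ι →₀ k[H]) →ₗ[k] S.restrictScalars k :=
    ((Finsupp.linearCombination k[H] w).restrictScalars k).codRestrict _ fun x => by
      rw [LinearMap.restrictScalars_apply, Finsupp.linearCombination_apply]
      exact Submodule.sum_mem _ fun i _ => S.smul_mem _ (hwS i)
  have hf : Function.Injective f := fun x y hxy => hw (congrArg Subtype.val hxy)
  calc Fintype.card ι * Nat.card H = Module.finrank k (ι →₀ k[H]) := by
        rw [(Finsupp.linearEquivFunOnFinite k k[H] ι).finrank_eq, Module.finrank_pi_fintype,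
          Module.finrank_eq_nat_card_basis (basis H k)]
        simp
    _ ≤ _ := LinearMap.finrank_le_finrank_of_injective hf

theorem stmt8_general (p : ℕ) [Fact p.Prime] (H : Type) [Group H] [Finite H]
    (hH : IsPGroup p H) (m n : ℕ)
    (α : (Fin m → MonoidAlgebra (ZMod p) H) →ₗ[MonoidAlgebra (ZMod p) H]
      (Fin n → MonoidAlgebra (ZMod p) H))
    (ε : MonoidAlgebra (ZMod p) H →ₐ[ZMod p] ZMod p)
    (hε : ε = MonoidAlgebra.lift (ZMod p) (ZMod p) H 1)
    (αbar : (Fin m → ZMod p) →ₗ[ZMod p] (Fin n → ZMod p))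
    (hαbar : ∀ v : Fin m → MonoidAlgebra (ZMod p) H,
      αbar (fun i => ε (v i)) = fun j => ε (α v j)) :
    Nat.card H * Module.finrank (ZMod p) (LinearMap.range αbar) ≤
      Module.finrank (ZMod p) ((LinearMap.range α).restrictScalars (ZMod p)) := by
  have := Fintype.ofFinite H
  set W := LinearMap.range αbar
  have hlift : ∀ y ∈ W, ∃ w ∈ LinearMap.range α, (fun j => ε (w j)) = y := by
    rintro _ ⟨u, rfl⟩
    refine ⟨α fun i => algebraMap _ _ (u i), LinearMap.mem_range_self _ _, ?_⟩
    rw [← hαbar]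
    simp only [AlgHom.commutes, Algebra.algebraMap_self, RingHom.id_apply]
  let b := Module.finBasis (ZMod p) W
  choose w hwα hwb using fun j => hlift _ (b j).2
  have hind : LinearIndependent (ZMod p) fun j i => ε (w j i) := by
    rw [show (fun j i => ε (w j i)) = W.subtype ∘ b from funext hwb]
    exact b.linearIndependent.map' W.subtype W.ker_subtype
  have := card_mul_card_le_finrank_of_linearIndependent
    (hH.linearIndependent_of_linearIndependent_augmentation w (hε ▸ hind)) hwα
  rwa [Fintype.card_fin, mul_comm] at this

/-- Lemma 2.1 (Bergeron–Linnell–Lück–Sauer): let `H` be a finite `p`-group and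
`α : 𝔽_p[H]^m → 𝔽_p[H]^n` a map of left `𝔽_p[H]`-modules. If `ᾱ : 𝔽_p^m → 𝔽_p^n` is the
map induced by the augmentation `ε : 𝔽_p[H] → 𝔽_p` (i.e. `ᾱ = id ⊗_{𝔽_p[H]} α`), then
`dim_{𝔽_p} im(α) ≥ |H| ⬝ dim_{𝔽_p} im(ᾱ)`, where `im(α)` is viewed as an `𝔽_p`-subspace. -/
theorem stmt8 (p : ℕ) [Fact p.Prime] (H : Type) [Group H] [Finite H]
    (hH : IsPGroup p H) (m n : ℕ) (hm : 0 < m) (hn : 0 < n)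
    (α : (Fin m → MonoidAlgebra (ZMod p) H) →ₗ[MonoidAlgebra (ZMod p) H]
      (Fin n → MonoidAlgebra (ZMod p) H))
    (ε : MonoidAlgebra (ZMod p) H →ₐ[ZMod p] ZMod p)
    (hε : ε = MonoidAlgebra.lift (ZMod p) (ZMod p) H 1)
    (αbar : (Fin m → ZMod p) →ₗ[ZMod p] (Fin n → ZMod p))
    (hαbar : ∀ v : Fin m → MonoidAlgebra (ZMod p) H,
      αbar (fun i => ε (v i)) = fun j => ε (α v j)) :
    Nat.card H * Module.finrank (ZMod p) (LinearMap.range αbar) ≤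
      Module.finrank (ZMod p) ((LinearMap.range α).restrictScalars (ZMod p)) :=
  stmt8_general p H hH m n α ε hε αbar hαbar
end

section
/- Let p be a prime. Let (X,R) be a presentation of a group G with X finite and every element of R non-trivial; write F = F(X) for the free group on X and π : F → G for the natural projection, so G = F/⟨⟨R⟩⟩. Let H be a normal subgroup of G of p-power index and F_H = π^{−1}(H). Then there exists a subset R_H ⊆ F_H such that the kernel of the induced surjection F_H → H equals the normal closure of R_H in F_H, and R_H can be written as a union R_H = ⋃_{r∈R} S_r, where each S_r is a set of F-conjugates of r of cardinality [G:H]/p^{e_p(r,F) − e_p(r,F_H)}. -/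
/-- `epIn p S w`: the largest natural number `e` such that `w` has a `p^e`-th root
belonging to the subgroup `S` of the free group.  For `S = ⊤` this is `e_p(w, F)`. -/
noncomputable def epIn {X : Type*} (p : ℕ) (S : Subgroup (FreeGroup X)) (w : FreeGroup X) : ℕ :=
  sSup {e : ℕ | ∃ v ∈ S, v ^ p ^ e = w}

/-!
By Nielsen–Schreier, the centralizer of `r ≠ 1` in a free group is a free group with non-trivial
centre, hence infinite cyclic, say `⟨z⟩`. So every root of `r` is a power of `z`, and the maximal
`p`-power root `v = z ^ a`, `r = v ^ p ^ e` with `e = e_p(r, F)`, has `p ∤ a`. As `F ⧸ F_H` is a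
`p`-group, `C_F(r)` maps onto `⟨v⟩` there, and as roots in `F` are unique, `v ^ p ^ t ∈ F_H`
exactly when `t ≥ e - e_p(r, F_H)`. Hence `F_H C_F(r)` has index `[G : H] / p ^ (e - e_p(r, F_H))`.
Its cosets index the `F_H`-classes into which the `F`-class of `r` splits, and one representative
of each, over all `r ∈ R`, normally generates `⟨⟨R⟩⟩ ∩ F_H` in `F_H`.
-/

open Subgroup

namespace FreeGroup

variable {S : Type*}

theorem not_commute_of_of_ne {a b : S} (hab : a ≠ b) : ¬Commute (of a) (of b) := by
  classical
  intro h
  have := congrArg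
    (lift fun s => if s = a then Equiv.swap (0 : Fin 3) 1 else Equiv.swap 1 2) h.eq
  simp [hab.symm] at this
  exact absurd this (by decide)

theorem of_zpow_ne_of_zpow {a b : S} (hab : a ≠ b) {m : ℤ} (hm : m ≠ 0) (n : ℤ) :
    of a ^ m ≠ of b ^ n := by
  classical
  intro h
  have := congrArg (lift (Pi.mulSingle a (Multiplicative.ofAdd (1 : ℤ)))) h
  simp [hab.symm] at this
  exact hm this

instance isCyclic_of_subsingleton [Subsingleton S] : IsCyclic (FreeGroup S) := by
  obtain ⟨g, hg⟩ : ∃ g : FreeGroup S, Set.range of ⊆ {g} := by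
    rcases isEmpty_or_nonempty S with _ | ⟨⟨a⟩⟩
    · exact ⟨1, by simp [Set.range_eq_empty]⟩
    · exact ⟨of a, by rintro _ ⟨b, rfl⟩; rw [Subsingleton.elim b a]; rfl⟩
  refine isCyclic_iff_exists_zpowers_eq_top.2 ⟨g, top_le_iff.1 ?_⟩
  rw [← closure_range_of, zpowers_eq_closure]
  exact closure_mono hg

end FreeGroup

namespace IsFreeGroup

variable {G : Type*} [Group G] [IsFreeGroup G]

theorem isCyclic_of_subsingleton_generators [Subsingleton (Generators G)] : IsCyclic G :=
  isCyclic_of_surjective (toFreeGroup G).symm (toFreeGroup G).symm.surjective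

theorem isCyclic_of_isMulCommutative [IsMulCommutative G] : IsCyclic G := by
  suffices Subsingleton (Generators G) from isCyclic_of_subsingleton_generators
  refine subsingleton_iff.2 fun a b =>
    by_contra fun hab => FreeGroup.not_commute_of_of_ne hab ?_
  have : Commute ((toFreeGroup G).symm (.of a)) ((toFreeGroup G).symm (.of b)) :=
    IsMulCommutative.is_comm.comm _ _
  simpa using this.map (toFreeGroup G)

theorem exists_zpow_eq_zpow_of_commute {x y : G} (h : Commute x y) (hx : x ≠ 1) (hy : y ≠ 1) :
    ∃ m n : ℤ, m ≠ 0 ∧ n ≠ 0 ∧ x ^ m = y ^ n := by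
  have := isMulCommutative_closure (k := {x, y}) (by
    rintro a (rfl | rfl) b (rfl | rfl)
    exacts [rfl, h.eq, h.symm.eq, rfl])
  obtain ⟨t, ht⟩ := (isCyclic_of_isMulCommutative (G := closure {x, y})).exists_generator
  obtain ⟨i, hi⟩ := mem_zpowers_iff.1 (ht ⟨x, subset_closure (by simp)⟩)
  obtain ⟨j, hj⟩ := mem_zpowers_iff.1 (ht ⟨y, subset_closure (by simp)⟩)
  replace hi : (t : G) ^ i = x := by simpa using congrArg Subtype.val hi
  replace hj : (t : G) ^ j = y := by simpa using congrArg Subtype.val hj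
  refine ⟨j, i, ?_, ?_, ?_⟩
  · rintro rfl; simp [← hj] at hy
  · rintro rfl; simp [← hi] at hx
  · have key : ∀ t' : G, t' ^ i = x → t' ^ j = y → x ^ j = y ^ i := by
      rintro t' rfl rfl
      rw [← zpow_mul, ← zpow_mul, mul_comm]
    exact key t hi hj

theorem isCyclic_of_mem_center {c : G} (hc : c ∈ center G) (hc1 : c ≠ 1) : IsCyclic G := by
  suffices Subsingleton (Generators G) from isCyclic_of_subsingleton_generators
  refine subsingleton_iff.2 fun a b => by_contra fun hab => ?_
  set c' := toFreeGroup G c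
  have hc' : c' ≠ 1 := by simpa [c'] using hc1
  have hcomm (s : Generators G) : Commute c' (.of s) := by
    have : Commute c ((toFreeGroup G).symm (.of s)) := (mem_center_iff.1 hc _).symm
    simpa [c'] using this.map (toFreeGroup G)
  obtain ⟨m₁, n₁, -, hn₁, h₁⟩ :=
    exists_zpow_eq_zpow_of_commute (hcomm a) hc' (FreeGroup.of_ne_one a)
  obtain ⟨m₂, n₂, hm₂, -, h₂⟩ :=
    exists_zpow_eq_zpow_of_commute (hcomm b) hc' (FreeGroup.of_ne_one b)
  refine FreeGroup.of_zpow_ne_of_zpow hab (mul_ne_zero hn₁ hm₂) (n₂ * m₁) ?_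
  rw [zpow_mul, zpow_mul, ← h₁, ← h₂, ← zpow_mul, ← zpow_mul, mul_comm]

theorem exists_centralizer_eq_zpowers {r : G} (hr : r ≠ 1) :
    ∃ z : G, centralizer {r} = zpowers z := by
  have hrK : (⟨r, mem_centralizer_singleton_iff.2 rfl⟩ : centralizer {r}) ∈ center _ :=
    mem_center_iff.2 fun g => Subtype.ext (mem_centralizer_singleton_iff.1 g.2)
  obtain ⟨g, hg⟩ := (isCyclic_of_mem_center hrK (by simpa using hr)).exists_generator
  refine ⟨g, le_antisymm (fun y hy => ?_) (zpowers_le.2 g.2)⟩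
  obtain ⟨k, hk⟩ := mem_zpowers_iff.1 (hg ⟨y, hy⟩)
  exact mem_zpowers_iff.2 ⟨k, by simpa using congrArg Subtype.val hk⟩

end IsFreeGroup

namespace Subgroup

variable {F : Type*} [Group F]

theorem mem_centralizer_of_pow_eq {v r : F} {n : ℕ} (h : v ^ n = r) : v ∈ centralizer {r} :=
  mem_centralizer_singleton_iff.2 (h ▸ (Commute.self_pow v n).eq)

theorem normalClosure_eq_comap_subtype_normalClosure {N : Subgroup F} {R : Set F} {T : Set N}
    (hT : ∀ w ∈ T, ∃ r ∈ R, ∃ f : F, (w : F) = f * r * f⁻¹)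
    (hR : ∀ r ∈ R, ∀ f : F, ∃ w ∈ T, ∃ g : N, ((g * w * g⁻¹ : N) : F) = f * r * f⁻¹) :
    normalClosure T = (normalClosure R).comap N.subtype := by
  refine le_antisymm (normalClosure_le_normal fun w hw => ?_) fun x hx => ?_
  · obtain ⟨r, hr, f, hw⟩ := hT w hw
    change (w : F) ∈ normalClosure R
    exact hw ▸ normalClosure_normal.conj_mem r (subset_normalClosure hr) f
  · suffices normalClosure R ≤ (normalClosure T).map N.subtype by
      obtain ⟨y, hy, hyx⟩ := this hx
      rwa [Subtype.val_injective hyx] at hy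
    refine closure_le _ |>.2 fun y hy => ?_
    obtain ⟨r, hr, hry⟩ := Group.mem_conjugatesOfSet_iff.1 hy
    obtain ⟨f, rfl⟩ := isConj_iff.1 hry
    obtain ⟨w, hw, g, hg⟩ := hR r hr f
    exact ⟨_, normalClosure_normal.conj_mem w (subset_normalClosure hw) g, hg⟩

theorem exists_conj_transversal (N : Subgroup F) [N.Normal] {r : F} (hr : r ∈ N) :
    ∃ T : Set N, (∀ w ∈ T, ∃ f : F, (w : F) = f * r * f⁻¹) ∧
      Nat.card T = (N ⊔ centralizer {r}).index ∧
      ∀ f : F, ∃ w ∈ T, ∃ g : N, ((g * w * g⁻¹ : N) : F) = f * r * f⁻¹ := by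
  let conj (f : F) : N := ⟨f * r * f⁻¹, Normal.conj_mem ‹_› r hr f⟩
  let rep (c : F ⧸ (N ⊔ centralizer {r})) : N := conj c.out
  have hrep : Function.Injective rep := by
    intro c₁ c₂ h
    have h' : c₁.out * r * c₁.out⁻¹ = c₂.out * r * c₂.out⁻¹ := congrArg Subtype.val h
    have hC : c₂.out⁻¹ * c₁.out ∈ centralizer {r} := by
      rw [mem_centralizer_singleton_iff]
      calc c₂.out⁻¹ * c₁.out * r = c₂.out⁻¹ * (c₁.out * r * c₁.out⁻¹) * c₁.out := by group
        _ = r * (c₂.out⁻¹ * c₁.out) := by rw [h']; group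
    rw [← QuotientGroup.out_eq' c₁, ← QuotientGroup.out_eq' c₂]
    exact (QuotientGroup.eq.2 (mem_sup_right hC)).symm
  refine ⟨Set.range rep, ?_, ?_, ?_⟩
  · rintro _ ⟨c, rfl⟩
    exact ⟨c.out, rfl⟩
  · rw [Nat.card_range_of_injective hrep, index_eq_card]
  · intro f
    obtain ⟨m, hm⟩ := QuotientGroup.mk_out_eq_mul (N ⊔ centralizer {r}) f
    obtain ⟨n, hn, c, hc, hnc⟩ := mem_sup_of_normal_left.1 (inv_mem m.2)
    set o := (f : F ⧸ (N ⊔ centralizer {r})).out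
    have hf : f = o * n * c := by rw [mul_assoc, hnc, hm]; group
    refine ⟨rep f, ⟨f, rfl⟩, ⟨o * n * o⁻¹, Normal.conj_mem ‹_› n hn o⟩, ?_⟩
    have hcr : c * r * c⁻¹ = r := by rw [mem_centralizer_singleton_iff.1 hc]; group
    calc o * n * o⁻¹ * (o * r * o⁻¹) * (o * n * o⁻¹)⁻¹ = o * n * r * n⁻¹ * o⁻¹ := by group
      _ = o * n * (c * r * c⁻¹) * n⁻¹ * o⁻¹ := by rw [hcr]
      _ = f * r * f⁻¹ := by rw [hf]; group

end Subgroup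

theorem IsPGroup.zpowers_zpow_eq {p : ℕ} [Fact p.Prime] {Q : Type*} [Group Q]
    (hQ : IsPGroup p Q) (g : Q) {a : ℤ} (ha : ¬(p : ℤ) ∣ a) : zpowers (g ^ a) = zpowers g := by
  refine le_antisymm (zpowers_le.2 (zpow_mem (mem_zpowers g) a)) (zpowers_le.2 ?_)
  obtain ⟨j, hj⟩ := IsPGroup.iff_orderOf.1 hQ g
  rw [mem_zpowers_zpow_iff, hj, ← Int.isCoprime_iff_gcd_eq_one, Nat.cast_pow]
  exact (((Nat.prime_iff_prime_int.1 Fact.out).coprime_iff_not_dvd).2 ha).pow_left.symm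

section Roots

variable {X : Type*} {p : ℕ} {r : FreeGroup X}

theorem FreeGroup.bddAbove_setOf_pow_pow_eq (hp : 1 < p) (hr : r ≠ 1)
    (S : Subgroup (FreeGroup X)) :
    BddAbove {e : ℕ | ∃ v ∈ S, v ^ p ^ e = r} := by
  obtain ⟨z, hz⟩ := IsFreeGroup.exists_centralizer_eq_zpowers hr
  obtain ⟨m, rfl⟩ :=
    mem_zpowers_iff.1 (hz ▸ mem_centralizer_singleton_iff.2 rfl : r ∈ zpowers z)
  refine ⟨m.natAbs, ?_⟩
  rintro e ⟨v, -, hv⟩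
  obtain ⟨s, rfl⟩ := mem_zpowers_iff.1 (hz ▸ mem_centralizer_of_pow_eq hv)
  have hz1 : z ≠ 1 := by rintro rfl; simp at hr
  have hsm : s * (p ^ e : ℕ) = m :=
    injective_zpow_iff_not_isOfFinOrder.2 (not_isOfFinOrder_of_isMulTorsionFree hz1)
      (by dsimp only; rw [zpow_mul, zpow_natCast, hv])
  have hs : s ≠ 0 := by rintro rfl; simp [← hsm] at hr
  calc e ≤ p ^ e := (Nat.lt_pow_self hp).le
    _ ≤ s.natAbs * p ^ e := Nat.le_mul_of_pos_left _ (Int.natAbs_pos.2 hs)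
    _ = m.natAbs := by rw [← hsm, Int.natAbs_mul, Int.natAbs_natCast]

theorem le_epIn (hp : 1 < p) (hr : r ≠ 1) {S : Subgroup (FreeGroup X)} {v : FreeGroup X} {e : ℕ}
    (hv : v ∈ S) (h : v ^ p ^ e = r) : e ≤ epIn p S r :=
  le_csSup (FreeGroup.bddAbove_setOf_pow_pow_eq hp hr S) ⟨v, hv, h⟩

theorem exists_pow_epIn_eq (hp : 1 < p) (hr : r ≠ 1) {S : Subgroup (FreeGroup X)}
    (hrS : r ∈ S) :
    ∃ v ∈ S, v ^ p ^ epIn p S r = r :=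
  Nat.sSup_mem (⟨0, r, hrS, by simp⟩ : {e : ℕ | ∃ v ∈ S, v ^ p ^ e = r}.Nonempty)
    (FreeGroup.bddAbove_setOf_pow_pow_eq hp hr S)

section MaximalRoot

variable (hp : p.Prime) (hr : r ≠ 1) {N : Subgroup (FreeGroup X)} [N.Normal] {v : FreeGroup X}
  (hv : v ^ p ^ epIn p ⊤ r = r)
include hp hr hv

theorem orderOf_mk_of_pow_epIn_eq (hrN : r ∈ N) :
    orderOf (v : FreeGroup X ⧸ N) = p ^ (epIn p ⊤ r - epIn p N r) := by
  set e := epIn p ⊤ r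
  set eN := epIn p N r
  obtain ⟨w, hwN, hw⟩ := exists_pow_epIn_eq hp.one_lt hr hrN
  have heN : eN ≤ e := le_epIn hp.one_lt hr (mem_top w) hw
  have hvw : v ^ p ^ (e - eN) = w := pow_left_injective (pow_ne_zero eN hp.ne_zero) <| by
    change (v ^ p ^ (e - eN)) ^ p ^ eN = w ^ p ^ eN
    rw [← pow_mul, ← pow_add, Nat.sub_add_cancel heN, hv, hw]
  obtain ⟨t, ht, hto⟩ := (Nat.dvd_prime_pow hp).1 <|
    orderOf_dvd_of_pow_eq_one (x := (v : FreeGroup X ⧸ N)) <| by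
      rw [← QuotientGroup.mk_pow, hvw]; exact (QuotientGroup.eq_one_iff w).2 hwN
  have hvt : v ^ p ^ t ∈ N := (QuotientGroup.eq_one_iff _).1 <| by
    rw [QuotientGroup.mk_pow, ← hto, pow_orderOf_eq_one]
  have : e - t ≤ eN := le_epIn hp.one_lt hr hvt <| by
    rw [← pow_mul, ← pow_add, Nat.add_sub_cancel' (ht.trans (Nat.sub_le e eN)), hv]
  rw [hto]
  congr 1
  omega

theorem map_mk_centralizer_eq_zpowers (hQ : IsPGroup p (FreeGroup X ⧸ N)) :
    (centralizer {r}).map (QuotientGroup.mk' N) = zpowers (v : FreeGroup X ⧸ N) := by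
  have := Fact.mk hp
  obtain ⟨z, hz⟩ := IsFreeGroup.exists_centralizer_eq_zpowers hr
  obtain ⟨a, rfl⟩ := mem_zpowers_iff.1 (hz ▸ mem_centralizer_of_pow_eq hv)
  have ha : ¬(p : ℤ) ∣ a := by
    rintro ⟨b, rfl⟩
    have : epIn p ⊤ r + 1 ≤ epIn p ⊤ r := le_epIn hp.one_lt hr (mem_top (z ^ b)) <| by
      rw [pow_succ', pow_mul, ← zpow_natCast (z ^ b) p, ← zpow_mul, mul_comm b]
      exact hv
    omega
  rw [hz, MonoidHom.map_zpowers, QuotientGroup.mk_zpow, hQ.zpowers_zpow_eq _ ha]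
  rfl

end MaximalRoot

theorem index_sup_centralizer_mul_pow_eq (hp : p.Prime) (hr : r ≠ 1) {N : Subgroup (FreeGroup X)}
    [N.Normal] (hQ : IsPGroup p (FreeGroup X ⧸ N)) (hrN : r ∈ N) :
    (N ⊔ centralizer {r}).index * p ^ (epIn p ⊤ r - epIn p N r) = N.index := by
  obtain ⟨v, -, hv⟩ := exists_pow_epIn_eq hp.one_lt hr (mem_top r)
  have : N ⊔ centralizer {r} = ((centralizer {r}).map (QuotientGroup.mk' N)).comap
      (QuotientGroup.mk' N) := by
    rw [comap_map_eq, QuotientGroup.ker_mk', sup_comm]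
  rw [this, index_comap_of_surjective _ (QuotientGroup.mk'_surjective _),
    map_mk_centralizer_eq_zpowers hp hr hv hQ, ← orderOf_mk_of_pow_epIn_eq hp hr hv hrN,
    ← Nat.card_zpowers, index_mul_card, index_eq_card]

end Roots

theorem stmt9_general (p : ℕ) (hp : p.Prime) (X : Type)
    (R : Set (FreeGroup X)) (hR : ∀ r ∈ R, r ≠ 1)
    (G : Type) [Group G] (π : FreeGroup X →* G) (hsurj : Function.Surjective π)
    (hker : MonoidHom.ker π = Subgroup.normalClosure R)
    (H : Subgroup G) (hHnorm : H.Normal) (k : ℕ) (hHidx : H.index = p ^ k) :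
    ∃ S : R → Set (Subgroup.comap π H),
      (∀ r : R, ∀ w ∈ S r, ∃ f : FreeGroup X,
        (w : FreeGroup X) = f * (r : FreeGroup X) * f⁻¹) ∧
      (∀ r : R, Nat.card (S r) *
          p ^ (epIn p ⊤ (r : FreeGroup X) - epIn p (Subgroup.comap π H) (r : FreeGroup X))
          = H.index) ∧
      MonoidHom.ker
        ((π.domRestrict (Subgroup.comap π H)).codRestrict H (fun x => x.2)) =
        Subgroup.normalClosure (⋃ r : R, S r) := by
  have := hHnorm.comap π
  have hQ : IsPGroup p (FreeGroup X ⧸ H.comap π) :=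
    IsPGroup.of_card (by rw [← index_eq_card, index_comap_of_surjective H hsurj, hHidx])
  have hRN (r : R) : (r : FreeGroup X) ∈ H.comap π := by
    rw [mem_comap, MonoidHom.mem_ker.1 (hker ▸ subset_normalClosure r.2)]
    exact H.one_mem
  choose S hS_conj hS_card hS_cover using fun r : R => exists_conj_transversal _ (hRN r)
  refine ⟨S, hS_conj, fun r => ?_, ?_⟩
  · rw [hS_card, ← index_comap_of_surjective H hsurj]
    exact index_sup_centralizer_mul_pow_eq hp (hR r r.2) hQ (hRN r)
  · refine (MonoidHom.ker_codRestrict _ _ _).trans ?_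
    rw [MonoidHom.ker_domRestrict, hker]
    refine (normalClosure_eq_comap_subtype_normalClosure (fun w hw => ?_) fun r hr f => ?_).symm
    · obtain ⟨r, hw⟩ := Set.mem_iUnion.1 hw
      exact ⟨r, r.2, hS_conj r w hw⟩
    · obtain ⟨w, hw, hg⟩ := hS_cover ⟨r, hr⟩ f
      exact ⟨w, Set.mem_iUnion.2 ⟨⟨r, hr⟩, hw⟩, hg⟩

/-- Lemma (Schlage-Puchta/Osin): let `(X,R)` be a presentation of `G` with `X` finite and
all relators non-trivial, `π : F(X) → G` the projection, `H ⊴ G` of `p`-power index and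
`F_H = π⁻¹(H)`.  Then `H = F_H/⟨⟨R_H⟩⟩`, where `R_H = ⋃_{r ∈ R} S_r` and each `S_r` is a
set of `F`-conjugates of `r` of cardinality `[G:H]/p^{e_p(r,F) - e_p(r,F_H)}`. -/
theorem stmt9 (p : ℕ) (hp : p.Prime) (X : Type) [Finite X]
    (R : Set (FreeGroup X)) (hR : ∀ r ∈ R, r ≠ 1)
    (G : Type) [Group G] (π : FreeGroup X →* G) (hsurj : Function.Surjective π)
    (hker : MonoidHom.ker π = Subgroup.normalClosure R)
    (H : Subgroup G) (hHnorm : H.Normal) (k : ℕ) (hHidx : H.index = p ^ k) :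
    ∃ S : R → Set (Subgroup.comap π H),
      (∀ r : R, ∀ w ∈ S r, ∃ f : FreeGroup X,
        (w : FreeGroup X) = f * (r : FreeGroup X) * f⁻¹) ∧
      (∀ r : R, Nat.card (S r) *
          p ^ (epIn p ⊤ (r : FreeGroup X) - epIn p (Subgroup.comap π H) (r : FreeGroup X))
          = H.index) ∧
      MonoidHom.ker
        ((π.domRestrict (Subgroup.comap π H)).codRestrict H (fun x => x.2)) =
        Subgroup.normalClosure (⋃ r : R, S r) :=
  stmt9_general p hp X R hR G π hsurj hker H hHnorm k hHidx
end

section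
/- Let p be a prime, let (X,R) be a finite p-regular presentation (every element of R non-trivial), let G = F(X)/⟨⟨R⟩⟩ with projection π : F(X) → G, and let f ∈ F(X) be an element whose image in the pro-p completion of G has infinite order, i.e., for every k ≥ 1 there exists a normal subgroup N of G of p-power index with π(f)^k ∉ N. Then there exists N ∈ ℕ such that for all n ≥ N the presentation (X, R ∪ {f^{p^n}}) is p-regular. -/
/-!
Roots in a free group are unique, so each relator `r ∈ R` has at most one `p`-th root, and
`p`-regularity of `(X, R)` provides a normal subgroup of some index `p ^ k` containing `R` and
avoiding it. Beyond the largest of these finitely many `k`, such a subgroup also contains `f ^ pⁿ`.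
The only `p`-th root of the new relator `f ^ pⁿ` is `f ^ pⁿ⁻¹`, which survives in some finite
`p`-group quotient `F(X)/M₀` of `G`. There, a normal subgroup maximal among those avoiding the
image `y` of `f ^ pⁿ⁻¹` contains `y ^ p`: modulo it, `y` lies in every nontrivial normal
subgroup, in particular in the one generated by a central element of order `p`.
-/

/-- A presentation of `G` (given by a projection `π : F(X) → G` and relator set `R`) is
`p`-regular if for every `r ∈ R` admitting a `p`-th root `s` in `F(X)`, the image `π s`
survives in some quotient of `G` of `p`-power order. -/
def IsPRegular (p : ℕ) {X G : Type*} [Group G] (π : FreeGroup X →* G)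
    (R : Set (FreeGroup X)) : Prop :=
  ∀ r ∈ R, ∀ s : FreeGroup X, s ^ p = r →
    ∃ N : Subgroup G, N.Normal ∧ (∃ k : ℕ, N.index = p ^ k) ∧ π s ∉ N

open Subgroup QuotientGroup

theorem Subgroup.normal_zpowers_of_mem_center {G : Type*} [Group G] {z : G}
    (hz : z ∈ center G) : (zpowers z).Normal where
  conj_mem a ha g := by
    have hcomm : g * a = a * g := mem_center_iff.1 (zpowers_le.2 hz ha) g
    rwa [hcomm, mul_inv_cancel_right]

theorem Subgroup.pow_mem_of_index_dvd {G : Type*} [Group G] (M : Subgroup G) [M.Normal]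
    {m : ℕ} (h : M.index ∣ m) (g : G) : g ^ m ∈ M := by
  obtain ⟨c, rfl⟩ := h
  rw [pow_mul]
  exact pow_mem (M.pow_index_mem g) c

section PGroup

variable {p : ℕ} [Fact p.Prime] {Q : Type*} [Group Q] [Finite Q]

theorem IsPGroup.exists_mem_center_orderOf_eq [Nontrivial Q] (hQ : IsPGroup p Q) :
    ∃ z ∈ center Q, orderOf z = p := by
  have := hQ.center_nontrivial
  have hdvd : p ∣ Nat.card (center Q) :=
    (hQ.to_subgroup _).card_eq_or_dvd.resolve_left Finite.one_lt_card.ne'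
  obtain ⟨z, hz⟩ := exists_prime_orderOf_dvd_card' p hdvd
  exact ⟨z, z.2, by rwa [Subgroup.orderOf_coe]⟩

theorem IsPGroup.exists_normal_notMem_pow_mem (hQ : IsPGroup p Q) {y : Q} (hy : y ≠ 1) :
    ∃ M : Subgroup Q, M.Normal ∧ y ∉ M ∧ y ^ p ∈ M := by
  obtain ⟨M, ⟨hM, hyM⟩, hmax⟩ :=
    (Set.toFinite {M : Subgroup Q | M.Normal ∧ y ∉ M}).exists_maximal
      ⟨⊥, inferInstance, by simpa using hy⟩
  refine ⟨M, hM, hyM, ?_⟩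
  have hmin : ∀ N : Subgroup (Q ⧸ M), N.Normal → N ≠ ⊥ → (y : Q ⧸ M) ∈ N := by
    intro N hN hNbot
    by_contra hyN
    have hle : N.comap (mk' M) ≤ (⊥ : Subgroup (Q ⧸ M)).comap (mk' M) := by
      rw [MonoidHom.comap_bot, ker_mk']
      exact hmax ⟨hN.comap _, hyN⟩ (le_comap_mk' M N)
    exact hNbot (le_bot_iff.1 ((comap_le_comap_of_surjective (mk'_surjective M)).1 hle))
  have : Nontrivial (Q ⧸ M) := ⟨⟨y, 1, by rwa [Ne, eq_one_iff]⟩⟩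
  obtain ⟨z, hzZ, hz⟩ := (hQ.to_quotient M).exists_mem_center_orderOf_eq
  have hz1 : z ≠ 1 := fun h => (Fact.out : p.Prime).one_lt.ne' (by rw [← hz, h, orderOf_one])
  obtain ⟨k, hk⟩ := mem_zpowers_iff.1
    (hmin _ (normal_zpowers_of_mem_center hzZ) (by rwa [Ne, zpowers_eq_bot]))
  rw [← eq_one_iff, mk_pow, ← hk, ← zpow_natCast, ← zpow_mul, mul_comm, zpow_mul, zpow_natCast,
    ← hz, pow_orderOf_eq_one, one_zpow]

end PGroup

theorem Subgroup.exists_normal_le_notMem_pow_mem {p : ℕ} [Fact p.Prime] {F : Type*}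
    [Group F] {M₀ : Subgroup F} [M₀.Normal] {k : ℕ} (hM₀ : M₀.index = p ^ k) {s : F} (hs : s ∉ M₀) :
    ∃ M : Subgroup F, M.Normal ∧ M₀ ≤ M ∧ (∃ j, M.index = p ^ j) ∧ s ∉ M ∧ s ^ p ∈ M := by
  have hQ : IsPGroup p (F ⧸ M₀) := IsPGroup.of_card (by rw [← index_eq_card, hM₀])
  have : M₀.FiniteIndex := ⟨by simp [hM₀, (Fact.out : p.Prime).ne_zero]⟩
  obtain ⟨N, hN, hsN, hspN⟩ :=
    hQ.exists_normal_notMem_pow_mem (y := s) (by rwa [Ne, eq_one_iff])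
  obtain ⟨j, hj⟩ := hQ.index N
  refine ⟨N.comap (mk' M₀), hN.comap _, le_comap_mk' M₀ N, ⟨j, ?_⟩, hsN, hspN⟩
  rw [index_comap_of_surjective _ (mk'_surjective M₀), hj]

theorem exists_normal_pow_index_notMem_quotient_normalClosure_iff {F : Type*} [Group F]
    (R : Set F) (p : ℕ) (s : F) :
    (∃ N : Subgroup (F ⧸ normalClosure R), N.Normal ∧ (∃ k, N.index = p ^ k) ∧
        mk' (normalClosure R) s ∉ N) ↔
      ∃ M : Subgroup F, M.Normal ∧ R ⊆ M ∧ (∃ k, M.index = p ^ k) ∧ s ∉ M := by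
  constructor
  · rintro ⟨N, hN, hidx, hsN⟩
    refine ⟨N.comap (mk' _), hN.comap _, subset_normalClosure.trans (le_comap_mk' _ N),
      by rwa [index_comap_of_surjective _ (mk'_surjective _)], hsN⟩
  · rintro ⟨M, hM, hRM, hidx, hsM⟩
    have hcomap : (M.map (mk' (normalClosure R))).comap (mk' _) = M := by
      rw [comap_map_mk', sup_eq_right.2 (normalClosure_le_normal hRM)]
    refine ⟨M.map (mk' _), hM.map _ (mk'_surjective _), ?_, ?_⟩
    · rwa [← index_comap_of_surjective _ (mk'_surjective _), hcomap]
    · rwa [← mem_comap, hcomap]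

theorem isPRegular_mk'_normalClosure_iff {X : Type*} (p : ℕ) (R : Set (FreeGroup X)) :
    IsPRegular p (mk' (normalClosure R)) R ↔ ∀ r ∈ R, ∀ s : FreeGroup X, s ^ p = r →
      ∃ M : Subgroup (FreeGroup X), M.Normal ∧ R ⊆ M ∧ (∃ k, M.index = p ^ k) ∧ s ∉ M := by
  simp only [IsPRegular, exists_normal_pow_index_notMem_quotient_normalClosure_iff]

theorem Set.Finite.exists_le_of_forall_pow_mem {F : Type*} [Group F] [IsMulTorsionFree F]
    {n : ℕ} (hn : n ≠ 0) {R : Set F} (hR : R.Finite) {P : ℕ → F → Prop}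
    (h : ∀ s, s ^ n ∈ R → ∃ k, P k s) : ∃ N₀, ∀ s, s ^ n ∈ R → ∃ k ≤ N₀, P k s := by
  choose! K hK using h
  have hroots : {s | s ^ n ∈ R}.Finite := hR.preimage (pow_left_injective hn).injOn
  obtain ⟨N₀, hN₀⟩ := (hroots.image K).bddAbove
  exact ⟨N₀, fun s hs => ⟨K s, hN₀ ⟨s, hs, rfl⟩, hK s hs⟩⟩

theorem stmt12_general (p : ℕ) (hp : p.Prime) (X : Type)
    (R : Finset (FreeGroup X))
    (hreg : IsPRegular p
      (QuotientGroup.mk' (Subgroup.normalClosure (R : Set (FreeGroup X))))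
      (R : Set (FreeGroup X)))
    (f : FreeGroup X)
    (hf : ∀ k : ℕ, 1 ≤ k →
      ∃ N : Subgroup (FreeGroup X ⧸ Subgroup.normalClosure (R : Set (FreeGroup X))),
        N.Normal ∧ (∃ j : ℕ, N.index = p ^ j) ∧
        (QuotientGroup.mk' (Subgroup.normalClosure (R : Set (FreeGroup X))) f) ^ k ∉ N) :
    ∃ N₀ : ℕ, ∀ n : ℕ, N₀ ≤ n →
      IsPRegular p
        (QuotientGroup.mk'
          (Subgroup.normalClosure ((R : Set (FreeGroup X)) ∪ {f ^ p ^ n})))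
        ((R : Set (FreeGroup X)) ∪ {f ^ p ^ n}) := by
  have : Fact p.Prime := ⟨hp⟩
  rw [isPRegular_mk'_normalClosure_iff] at hreg
  obtain ⟨N₀, hN₀⟩ := R.finite_toSet.exists_le_of_forall_pow_mem hp.ne_zero
    (P := fun k s => ∃ M : Subgroup (FreeGroup X),
      M.Normal ∧ (R : Set (FreeGroup X)) ⊆ M ∧ M.index = p ^ k ∧ s ∉ M)
    fun s hs => by
      obtain ⟨M, hM, hRM, ⟨k, hk⟩, hsM⟩ := hreg _ hs s rfl
      exact ⟨k, M, hM, hRM, hk, hsM⟩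
  refine ⟨N₀ + 1, fun n hn => (isPRegular_mk'_normalClosure_iff _ _).2 ?_⟩
  rintro r (hr | hr) s rfl
  · obtain ⟨k, hkN₀, M, hM, hRM, hk, hsM⟩ := hN₀ s hr
    have hfM : f ^ p ^ n ∈ M := M.pow_mem_of_index_dvd (hk ▸ pow_dvd_pow p (by omega)) f
    exact ⟨M, hM, Set.union_subset hRM (Set.singleton_subset_iff.2 hfM), ⟨k, hk⟩, hsM⟩
  · obtain ⟨m, rfl⟩ : ∃ m, n = m + 1 := ⟨n - 1, by omega⟩
    obtain rfl : s = f ^ p ^ m :=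
      pow_left_injective hp.ne_zero (by simpa [pow_succ, pow_mul] using hr)
    obtain ⟨M₀, hM₀, hRM₀, ⟨k, hk⟩, hfM₀⟩ :=
      (exists_normal_pow_index_notMem_quotient_normalClosure_iff _ _ (f ^ p ^ m)).1
        (by simpa only [map_pow] using hf (p ^ m) (Nat.one_le_pow _ _ hp.pos))
    obtain ⟨M, hM, hM₀M, hidx, hsM, hspM⟩ := exists_normal_le_notMem_pow_mem hk hfM₀
    refine ⟨M, hM, Set.union_subset (hRM₀.trans hM₀M) ?_, hidx, hsM⟩
    simpa [pow_succ, pow_mul] using hspM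

/-- Let `(X,R)` be a finite `p`-regular presentation of `G = F(X)/⟨⟨R⟩⟩` and `f ∈ F(X)` an
element whose image in the pro-`p` completion of `G` has infinite order (for every `k ≥ 1`
there is a normal subgroup of `p`-power index avoiding `π(f)^k`).  Then there exists `N ∈ ℕ`
such that for all `n ≥ N` the presentation `(X, R ∪ {f^{pⁿ}})` is `p`-regular. -/
theorem stmt12 (p : ℕ) (hp : p.Prime) (X : Type) [Finite X]
    (R : Finset (FreeGroup X)) (hR : ∀ r ∈ R, r ≠ 1)
    (hreg : IsPRegular p
      (QuotientGroup.mk' (Subgroup.normalClosure (R : Set (FreeGroup X))))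
      (R : Set (FreeGroup X)))
    (f : FreeGroup X)
    (hf : ∀ k : ℕ, 1 ≤ k →
      ∃ N : Subgroup (FreeGroup X ⧸ Subgroup.normalClosure (R : Set (FreeGroup X))),
        N.Normal ∧ (∃ j : ℕ, N.index = p ^ j) ∧
        (QuotientGroup.mk' (Subgroup.normalClosure (R : Set (FreeGroup X))) f) ^ k ∉ N) :
    ∃ N₀ : ℕ, ∀ n : ℕ, N₀ ≤ n →
      IsPRegular p
        (QuotientGroup.mk'
          (Subgroup.normalClosure ((R : Set (FreeGroup X)) ∪ {f ^ p ^ n})))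
        ((R : Set (FreeGroup X)) ∪ {f ^ p ^ n}) :=
  stmt12_general p hp X R hreg f hf
end

section
/- Let H be a group, let G = H ∗ ℤ be the free product of H with the infinite cyclic group, and let pr : G → ℤ be the homomorphism that is trivial on H and the identity on the ℤ-factor. For a positive integer n, let G_n = pr^{−1}(nℤ). Then G_n is a normal subgroup of G of index n, and G_n is isomorphic to the free product ℤ ∗ H ∗ H ∗ ⋯ ∗ H of ℤ with n copies of H. -/
/-!
In `A ∗ Γ` the normal closure of `A` is the free product of the conjugates `γ A γ⁻¹`, `γ ∈ Γ`;
hence `A ∗ Γ ≅ (∗_{γ ∈ Γ} A) ⋊ Γ`, where `Γ` permutes the factors by left multiplication and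
`pr` becomes the projection onto `Γ`. For `Γ = ℤ` the preimage of `nℤ` is `(∗_{j ∈ ℤ} H) ⋊ nℤ`.
Grouping the factors into the blocks `{qn, …, qn + n - 1}` identifies it with
`(∗_{q ∈ ℤ} (H ∗ ⋯ ∗ H)) ⋊ ℤ` for the shift action, which by the first step again is
`(H ∗ ⋯ ∗ H) ∗ ℤ`. Normality and index `n` hold because `pr` is onto the abelian group `ℤ`.
-/

open Monoid

namespace Monoid.CoprodI

section Reindex

variable {ι ι' κ : Type*} {A : Type*} [Monoid A]

def reindex (e : ι ≃ ι') : CoprodI (fun _ : ι => A) ≃* CoprodI (fun _ : ι' => A) :=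
  MonoidHom.toMulEquiv (lift fun i => of (M := fun _ : ι' => A) (i := e i))
    (lift fun i => of (M := fun _ : ι => A) (i := e.symm i))
    (by ext; simp) (by ext; simp)

@[simp]
theorem reindex_of (e : ι ≃ ι') (i : ι) (a : A) :
    reindex e (of (M := fun _ : ι => A) (i := i) a) = of (i := e i) a :=
  lift_of (fun i => of (M := fun _ : ι' => A) (i := e i)) a

theorem reindex_refl : reindex (Equiv.refl ι) = MulEquiv.refl (CoprodI fun _ : ι => A) :=
  MulEquiv.toMonoidHom_injective <| by ext; simp

theorem reindex_trans {ι'' : Type*} (e : ι ≃ ι') (e' : ι' ≃ ι'') :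
    reindex (A := A) (e.trans e') = (reindex e).trans (reindex e') :=
  MulEquiv.toMonoidHom_injective <| by ext; simp

def permAut : Equiv.Perm ι →* MulAut (CoprodI fun _ : ι => A) where
  toFun := reindex
  map_one' := reindex_refl
  map_mul' σ τ := reindex_trans τ σ

def curry : CoprodI (fun _ : ι × κ => A) ≃* CoprodI (fun _ : ι => CoprodI fun _ : κ => A) :=
  MonoidHom.toMulEquiv
    (lift fun p => (of (M := fun _ : ι => CoprodI fun _ : κ => A) (i := p.1)).comp
      (of (M := fun _ : κ => A) (i := p.2)))
    (lift fun i => lift fun k => of (M := fun _ : ι × κ => A) (i := (i, k)))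
    (by ext; simp) (by ext; simp)

@[simp]
theorem curry_of (i : ι) (k : κ) (a : A) :
    curry (of (M := fun _ : ι × κ => A) (i := (i, k)) a) = of (i := i) (of (i := k) a) :=
  lift_of (fun p : ι × κ => (of (M := fun _ : ι => CoprodI fun _ : κ => A) (i := p.1)).comp
      (of (M := fun _ : κ => A) (i := p.2))) a

@[simp]
theorem curry_symm_of (i : ι) (k : κ) (a : A) :
    curry.symm (of (M := fun _ : ι => CoprodI fun _ : κ => A) (i := i) (of (i := k) a)) =
      of (M := fun _ : ι × κ => A) (i := (i, k)) a := by
  rw [MulEquiv.symm_apply_eq, curry_of]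

end Reindex

section Shift

variable {Γ : Type*} [Group Γ] {A : Type*} [Monoid A]

def shift : Γ →* MulAut (CoprodI fun _ : Γ => A) :=
  permAut.comp (MulAction.toPermHom Γ Γ)

@[simp]
theorem shift_of (g γ : Γ) (a : A) :
    shift g (of (M := fun _ : Γ => A) (i := γ) a) = of (i := g * γ) a :=
  reindex_of _ _ _

end Shift

end Monoid.CoprodI

namespace Monoid.Coprod

open CoprodI SemidirectProduct

variable (A Γ : Type*) [Group A] [Group Γ]

def toSemidirectProduct : Coprod A Γ →* (CoprodI fun _ : Γ => A) ⋊[shift] Γ :=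
  lift (SemidirectProduct.inl.comp (CoprodI.of (M := fun _ : Γ => A) (i := 1)))
    SemidirectProduct.inr

@[simp]
theorem toSemidirectProduct_inl (a : A) :
    toSemidirectProduct A Γ (inl a) = SemidirectProduct.inl (CoprodI.of (i := 1) a) :=
  lift_apply_inl _ _ a

@[simp]
theorem toSemidirectProduct_inr (g : Γ) :
    toSemidirectProduct A Γ (inr g) = SemidirectProduct.inr g :=
  lift_apply_inr _ _ g

def ofSemidirectProduct : (CoprodI fun _ : Γ => A) ⋊[shift] Γ →* Coprod A Γ :=
  SemidirectProduct.lift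
    (CoprodI.lift fun γ => (MulAut.conj (inr γ : Coprod A Γ)).toMonoidHom.comp inl) inr
    (fun g => by ext γ a; simp [mul_assoc])

@[simp]
theorem ofSemidirectProduct_inl_of (γ : Γ) (a : A) :
    ofSemidirectProduct A Γ (SemidirectProduct.inl (CoprodI.of (i := γ) a)) =
      inr γ * inl a * (inr γ)⁻¹ := by
  simp [ofSemidirectProduct]

@[simp]
theorem ofSemidirectProduct_inr (g : Γ) :
    ofSemidirectProduct A Γ (SemidirectProduct.inr g) = inr g :=
  SemidirectProduct.lift_inr _ _ _ g

def mulEquivSemidirectProduct : Coprod A Γ ≃* (CoprodI fun _ : Γ => A) ⋊[shift] Γ :=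
  MonoidHom.toMulEquiv (toSemidirectProduct A Γ) (ofSemidirectProduct A Γ) (by ext <;> simp) <| by
    refine SemidirectProduct.hom_ext
      (CoprodI.ext_hom _ _ fun γ => MonoidHom.ext fun a => ?_) (MonoidHom.ext fun g => by simp)
    simp only [MonoidHom.comp_apply, MonoidHom.id_apply, ofSemidirectProduct_inl_of, map_mul,
      toSemidirectProduct_inl, toSemidirectProduct_inr, ← map_inv, ← inl_aut, shift_of, mul_one]

theorem rightHom_comp_mulEquivSemidirectProduct :
    rightHom.comp (mulEquivSemidirectProduct A Γ).toMonoidHom = lift 1 (MonoidHom.id Γ) := by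
  ext <;> simp [mulEquivSemidirectProduct]

end Monoid.Coprod

namespace SemidirectProduct

variable {N Γ Γ' : Type*} [Group N] [Group Γ] [Group Γ'] (φ : Γ →* MulAut N) {f : Γ' →* Γ}

noncomputable def mulEquivComapRange (hf : Function.Injective f) :
    N ⋊[φ.comp f] Γ' ≃* f.range.comap (rightHom : N ⋊[φ] Γ →* Γ) :=
  let m : N ⋊[φ.comp f] Γ' →* N ⋊[φ] Γ := map (MonoidHom.id N) f fun _ => rfl
  have hm : Function.Injective m := fun _ _ h =>
    SemidirectProduct.ext (congrArg (left (φ := φ)) h) (hf (congrArg (right (φ := φ)) h))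
  have hrange : m.range = f.range.comap rightHom := by
    ext x
    constructor
    · rintro ⟨y, rfl⟩
      exact ⟨y.right, rfl⟩
    · rintro ⟨g, hg⟩
      exact ⟨⟨x.left, g⟩, SemidirectProduct.ext rfl hg⟩
  (MonoidHom.ofInjective hm).trans (MulEquiv.subgroupCongr hrange)

end SemidirectProduct

namespace Multiplicative

theorem zpowersHom_ofAdd_injective {k : ℤ} (hk : k ≠ 0) :
    Function.Injective (zpowersHom (Multiplicative ℤ) (ofAdd k)) := fun x y h => by
  have h' := congrArg toAdd h
  simp only [zpowersHom_apply, toAdd_zpow, toAdd_ofAdd, smul_eq_mul] at h'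
  exact toAdd.injective (mul_right_cancel₀ hk h')

theorem index_zpowers_ofAdd (k : ℤ) : (Subgroup.zpowers (ofAdd k)).index = k.natAbs := by
  rw [← Subgroup.index_toAddSubgroup, ← Int.index_zmultiples]
  rfl

variable (n : ℕ) [NeZero n]

def intProdFinEquiv : Multiplicative ℤ × Fin n ≃ Multiplicative ℤ :=
  (toAdd.prodCongr (Equiv.refl _)).trans ((Int.divModEquiv n).symm.trans ofAdd)

theorem intProdFinEquiv_apply (q : Multiplicative ℤ) (r : Fin n) :
    intProdFinEquiv n (q, r) = ofAdd (q.toAdd * n + r) :=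
  rfl

theorem intProdFinEquiv_mul_left (g q : Multiplicative ℤ) (r : Fin n) :
    intProdFinEquiv n (g * q, r) = zpowersHom _ (ofAdd (n : ℤ)) g * intProdFinEquiv n (q, r) := by
  rw [intProdFinEquiv_apply, intProdFinEquiv_apply, zpowersHom_apply, ← ofAdd_zsmul, ← ofAdd_add,
    toAdd_mul, smul_eq_mul]
  congr 1
  ring

end Multiplicative

namespace Monoid.CoprodI

open Multiplicative SemidirectProduct

variable (A : Type*) [Group A] (n : ℕ) [NeZero n]

/-- The factor `r` of the block `q` is the factor `q n + r` of `∗_{j ∈ ℤ} A`, so shifting the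
blocks by `g` shifts the factors by `g n`. -/
noncomputable def blockMulEquiv :
    (CoprodI fun _ : Multiplicative ℤ => CoprodI fun _ : Fin n => A) ⋊[shift] Multiplicative ℤ ≃*
      (CoprodI fun _ : Multiplicative ℤ => A) ⋊[shift.comp (zpowersHom _ (ofAdd (n : ℤ)))]
        Multiplicative ℤ :=
  SemidirectProduct.congr (curry.symm.trans (reindex (intProdFinEquiv n))) (MulEquiv.refl _)
    fun g => MulEquiv.toMonoidHom_injective <| by
      ext q r a
      simp [-map_zpow, intProdFinEquiv_mul_left]

noncomputable def comapRightHomZPowersMulEquiv :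
    (Subgroup.zpowers (ofAdd (n : ℤ))).comap
        (rightHom : (CoprodI fun _ : Multiplicative ℤ => A) ⋊[shift] Multiplicative ℤ →* _) ≃*
      Coprod (Multiplicative ℤ) (CoprodI fun _ : Fin n => A) :=
  (MulEquiv.subgroupCongr (congrArg _ (Subgroup.range_zpowersHom _).symm)).trans <|
    (mulEquivComapRange (shift (A := A))
      (zpowersHom_ofAdd_injective (Int.natCast_ne_zero.mpr (NeZero.ne n)))).symm.trans <|
    (blockMulEquiv A n).symm.trans <|
    (Coprod.mulEquivSemidirectProduct _ _).symm.trans (MulEquiv.coprodComm _ _)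

end Monoid.CoprodI

open Multiplicative SemidirectProduct

/-- Let `H` be a group, `G = H ∗ ℤ` and `pr : G → ℤ` the homomorphism trivial on `H` and
the identity on the `ℤ`-factor.  For `n ≥ 1` let `G_n = pr⁻¹(nℤ)`.  Then `G_n` is a normal
subgroup of `G` of index `n` and `G_n ≅ ℤ ∗ H ∗ ⋯ ∗ H` (`n` copies of `H`). -/
theorem stmt14 (H : Type) [Group H] (n : ℕ) (hn : 0 < n)
    (pr : Monoid.Coprod H (Multiplicative ℤ) →* Multiplicative ℤ)
    (hpr : pr = Monoid.Coprod.lift 1 (MonoidHom.id (Multiplicative ℤ)))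
    (Gn : Subgroup (Monoid.Coprod H (Multiplicative ℤ)))
    (hGn : Gn = Subgroup.comap pr (Subgroup.zpowers (Multiplicative.ofAdd (n : ℤ)))) :
    Gn.Normal ∧ Gn.index = n ∧
      Nonempty (Gn ≃*
        Monoid.Coprod (Multiplicative ℤ) (Monoid.CoprodI (fun _ : Fin n => H))) := by
  have : NeZero n := ⟨hn.ne'⟩
  have hsurj : Function.Surjective pr := fun z => ⟨Coprod.inr z, by simp [hpr]⟩
  let e := Coprod.mulEquivSemidirectProduct H (Multiplicative ℤ)
  have hmap : Gn.map e.toMonoidHom = (Subgroup.zpowers (ofAdd (n : ℤ))).comap rightHom := by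
    rw [hGn, hpr, ← Coprod.rightHom_comp_mulEquivSemidirectProduct, ← Subgroup.comap_comap]
    exact Subgroup.map_comap_eq_self_of_surjective e.surjective _
  refine ⟨hGn ▸ Subgroup.Normal.comap (Subgroup.normal_of_isMulCommutative _) _, ?_, ?_⟩
  · rw [hGn, Subgroup.index_comap_of_surjective _ hsurj, index_zpowers_ofAdd, Int.natAbs_natCast]
  · exact ⟨(e.subgroupMap Gn).trans <|
      (MulEquiv.subgroupCongr hmap).trans (CoprodI.comapRightHomZPowersMulEquiv H n)⟩
end

section
/- Let p be a prime, P a finite p-group, and x ∈ P. If x lies in the normal closure in P of the singleton {x^p}, then x = 1. -/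
open Subgroup

private lemma aux19 (p : ℕ) (hp : p.Prime) : ∀ n (P : Type) [Group P] [Finite P],
    Nat.card P = n → IsPGroup p P → ∀ x : P, x ∈ normalClosure {x ^ p} → x = 1 := by
  intro n
  induction n using Nat.strong_induction_on with
  | _ n ih =>
    intro P _ _ hcard hP x hx
    by_cases htriv : x = 1
    · exact htriv
    have : Nontrivial P := ⟨x, 1, htriv⟩
    haveI := Fact.mk hp
    classical
    -- find a nontrivial central element y with y^p = 1
    haveI := hP.center_nontrivial
    obtain ⟨⟨z, hz⟩, hz1⟩ := exists_ne (1 : Subgroup.center P)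
    have hzne : z ≠ 1 := by
      simpa [Subtype.ext_iff] using hz1
    obtain ⟨k, hk⟩ := hP z
    -- take minimal k
    have hkpos : ∃ k, z ^ p ^ k = 1 := ⟨k, hk⟩
    let m := Nat.find hkpos
    have hm : z ^ p ^ m = 1 := Nat.find_spec hkpos
    have hmpos : m ≠ 0 := by
      intro h0
      apply hzne
      simpa [h0] using hm
    set y : P := z ^ p ^ (m - 1) with hy
    have hlt : m - 1 < Nat.find hkpos := Nat.sub_lt (Nat.pos_of_ne_zero hmpos) one_pos
    have hyne : y ≠ 1 := Nat.find_min hkpos hlt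
    have hyp : y ^ p = 1 := by
      rw [hy, ← pow_mul, ← pow_succ, Nat.sub_add_cancel (Nat.pos_of_ne_zero hmpos)]
      exact hm
    have hyc : y ∈ Subgroup.center P := by
      exact Subgroup.pow_mem _ hz _
    set Z : Subgroup P := Subgroup.zpowers y with hZ
    have hZnormal : Z.Normal := by
      constructor
      intro g hg q
      obtain ⟨i, hi⟩ := hg
      refine ⟨i, ?_⟩
      simp only at hi
      rw [← hi]
      have hc := Subgroup.mem_center_iff.mp (Subgroup.zpow_mem _ hyc i) q
      rw [hc, mul_inv_cancel_right]
    -- quotient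
    have hZnt : Nontrivial Z := ⟨⟨⟨y, Subgroup.mem_zpowers y⟩, 1, by simp [Subtype.ext_iff, hyne]⟩⟩
    have hZcard : 1 < Nat.card Z := Finite.one_lt_card_iff_nontrivial.mpr hZnt
    have hcardlt : Nat.card (P ⧸ Z) < n := by
      have := Subgroup.card_eq_card_quotient_mul_card_subgroup Z
      rw [hcard] at this
      have hpos : 0 < Nat.card (P ⧸ Z) := Nat.card_pos
      nlinarith
    have hPQ : IsPGroup p (P ⧸ Z) := hP.to_quotient Z
    have hxq : (QuotientGroup.mk x : P ⧸ Z) ∈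
        normalClosure {(QuotientGroup.mk x : P ⧸ Z) ^ p} := by
      have hsurj : Function.Surjective (QuotientGroup.mk' Z) :=
        QuotientGroup.mk'_surjective Z
      have := Subgroup.map_normalClosure {x ^ p} (QuotientGroup.mk' Z) hsurj
      have hmem : (QuotientGroup.mk' Z) x ∈
          Subgroup.map (QuotientGroup.mk' Z) (normalClosure {x ^ p}) :=
        Subgroup.mem_map_of_mem _ hx
      rw [this] at hmem
      simpa using hmem
    have hxZ : (QuotientGroup.mk x : P ⧸ Z) = 1 :=
      ih _ hcardlt (P ⧸ Z) rfl hPQ _ hxq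
    have hxmem : x ∈ Z := by
      rwa [← QuotientGroup.eq_one_iff]
    obtain ⟨i, hi⟩ := hxmem
    have hxp : x ^ p = 1 := by
      rw [← hi, ← zpow_natCast, ← zpow_mul, mul_comm, zpow_mul, zpow_natCast, hyp, one_zpow]
    rw [hxp] at hx
    have hle : Subgroup.normalClosure ({1} : Set P) ≤ ⊥ :=
      Subgroup.normalClosure_le_normal (by simp)
    simpa [Subgroup.mem_bot] using hle hx

/-- Let `p` be a prime, `P` a finite `p`-group and `x ∈ P`.  If `x` lies in the normal
closure of `{x^p}` in `P`, then `x = 1`. -/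
theorem stmt19 (p : ℕ) (hp : p.Prime) (P : Type) [Group P] [Finite P]
    (hP : IsPGroup p P) (x : P)
    (hx : x ∈ Subgroup.normalClosure {x ^ p}) : x = 1 :=
  aux19 p hp (Nat.card P) P rfl hP x hx
end
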